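/- Let T be a finite positively edge-weighted tree in which every vertex of degree at most 2 belongs to the image of a labeling map φ : X → V(T). If the metric subspace (φ(X), d_T) satisfies the fourth-point condition, then φ is surjective, i.e., every vertex of T is labeled. -/

import Mathlib

/-!
A vertex `v` of degree at least three has three neighbours `a`, `b`, `c`. The branch of `v`
through each of them ends in a leaf, which is labeled, so there are labeled `x`, `y`, `z` in
three different branches; `v` lies on the three paths between them and the half-perimeter of
`x, y, z` is `d(x,v) + d(y,v) + d(z,v)`. A vertex `q ≠ v` lies in at most one of the branches,
so `v` is on the paths from `q` to two of the points, say `y` and `z`, and the triangle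
inequality `d(x,v) ≤ d(x,q) + d(q,v)` gives
`d(x,q) + d(y,q) + d(z,q) ≥ d(x,v) + d(y,v) + d(z,v) + d(v,q)`, which exceeds the
half-perimeter. Hence the fourth point of `x, y, z` is `v`, and `v` is labeled.
-/

/-- The total weight of a walk in a graph, with respect to an edge-weight
function `w` on pairs of vertices. -/
def SimpleGraph.Walk.weight {V : Type*} {G : SimpleGraph V} (w : V → V → ℝ)
    {u v : V} (p : G.Walk u v) : ℝ :=
  (p.darts.map fun d => w d.toProd.1 d.toProd.2).sum

namespace SimpleGraph

variable {V : Type*} {G : SimpleGraph V}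

namespace Walk

variable {w : V → V → ℝ}

theorem weight_append {u v x : V} (p : G.Walk u v) (q : G.Walk v x) :
    (p.append q).weight w = p.weight w + q.weight w := by
  simp [weight, darts_append]

theorem weight_reverse (hw : ∀ u v, w u v = w v u) {u v : V} (p : G.Walk u v) :
    p.reverse.weight w = p.weight w := by
  simp [weight, darts_reverse, List.sum_reverse, Function.comp_def, hw]

theorem weight_pos (hw : ∀ u v, G.Adj u v → 0 < w u v) {u v : V} {p : G.Walk u v}
    (hp : ¬ p.Nil) : 0 < p.weight w :=
  List.sum_pos _ (by simpa using fun d _ => hw _ _ d.adj) (by simpa [darts_eq_nil] using hp)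

theorem weight_bypass_le [DecidableEq V] (hw : ∀ u v, G.Adj u v → 0 ≤ w u v) {u v : V}
    (p : G.Walk u v) : p.bypass.weight w ≤ p.weight w := by
  obtain ⟨l, hperm, hsub⟩ := (darts_nodup_of_support_nodup p.bypass_isPath.support_nodup).subperm
    (darts_bypass_subset_darts p)
  rw [weight, weight, ← (hperm.map _).sum_eq]
  exact (hsub.map _).sum_le_sum (by simpa using fun d _ => hw _ _ d.adj)

end Walk

def Separates (G : SimpleGraph V) (v u x : V) : Prop :=
  ∀ p : G.Walk u x, v ∈ p.support

theorem Separates.symm {v u x : V} (h : G.Separates v u x) : G.Separates v x u :=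
  fun p => by simpa using h p.reverse

theorem Separates.left_or_right {v u x : V} (h : G.Separates v u x) (y : V) :
    G.Separates v u y ∨ G.Separates v y x := by
  by_contra! hn
  simp only [Separates, not_forall] at hn
  obtain ⟨⟨p, hp⟩, ⟨q, hq⟩⟩ := hn
  rcases (Walk.mem_support_append_iff _ _).1 (h (p.append q)) with h' | h'
  exacts [hp h', hq h']

theorem IsAcyclic.separates_of_adj (hG : G.IsAcyclic) {v a b : V} (ha : G.Adj v a)
    (hb : G.Adj v b) (hab : a ≠ b) : G.Separates v a b := by
  intro p
  by_contra hv
  -- `s(v, a)` is a bridge, but the walk `v → b ⇝ a` reaches `a` without using it.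
  have hbridge := isBridge_iff_forall_walk_mem_edges.1
    (isAcyclic_iff_forall_adj_isBridge.1 hG ha) (Walk.cons hb p.reverse)
  rcases List.mem_cons.1 (Walk.edges_cons hb p.reverse ▸ hbridge) with h | h
  · exact hab (Sym2.congr_right.1 h)
  · exact hv (by simpa using p.reverse.fst_mem_support_of_mem_edges h)

theorem IsAcyclic.separates_of_not_separates (hG : G.IsAcyclic) {v a b u x : V}
    (ha : G.Adj v a) (hb : G.Adj v b) (hab : a ≠ b) (hu : ¬ G.Separates v a u)
    (hx : ¬ G.Separates v b x) : G.Separates v u x := by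
  rcases (hG.separates_of_adj ha hb hab).left_or_right u with h | h
  · exact absurd h hu
  rcases h.left_or_right x with h | h
  exacts [h, absurd h.symm hx]

theorem IsAcyclic.exists_degree_eq_one_not_separates [Finite G.edgeSet] [G.LocallyFinite]
    (hG : G.IsAcyclic) {v a : V} (ha : G.Adj v a) :
    ∃ u, G.degree u = 1 ∧ ¬ G.Separates v a u := by
  classical
  have := Fintype.ofFinite G.edgeSet
  -- a longest path starting with the edge `v a` ends in a leaf
  let s := {n | ∃ (u : V) (q : G.Walk a u), (Walk.cons ha q).IsPath ∧ q.length = n}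
  have hs : s.Finite := (Set.finite_le_nat G.edgeFinset.card).subset
    fun _ ⟨_, q, hq, hn⟩ => by
      have := hq.isTrail.length_le_card_edgeFinset
      rw [Walk.length_cons] at this
      exact hn ▸ (by omega : q.length ≤ _)
  obtain ⟨_, ⟨u, q, hq, rfl⟩, hmax⟩ := hs.exists_maximal ⟨0, a, .nil, by simp [ha.ne], rfl⟩
  have hnbr : ∀ t, G.Adj u t → t ∈ (Walk.cons ha q).support := fun t ht => by
    by_contra ht'
    have hlonger : (Walk.cons ha (q.concat ht)).IsPath := by
      rw [← Walk.concat_cons]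
      exact hq.concat ht' ht
    have := hmax ⟨t, _, hlonger, rfl⟩ (by simp)
    simp at this
  refine ⟨u, degree_eq_one_iff_existsUnique_adj.2 ⟨(Walk.cons ha q).penultimate, ?_, ?_⟩, fun h => ?_⟩
  · exact ((Walk.cons ha q).adj_penultimate Walk.not_nil_cons).symm
  · exact fun t ht => hG.eq_penultimate_of_adj_end hq ht (hnbr t ht)
  · exact ((Walk.cons_isPath_iff ha q).1 hq).2 (h q)

def IsPathWeightDist (G : SimpleGraph V) (w d : V → V → ℝ) : Prop :=
  ∀ u v (p : G.Walk u v), p.IsPath → d u v = p.weight w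

namespace IsPathWeightDist

variable {w d : V → V → ℝ}

theorem symm (hd : G.IsPathWeightDist w d) (hc : G.Connected) (hw : ∀ u v, w u v = w v u)
    (u v : V) : d u v = d v u := by
  obtain ⟨p, hp⟩ := hc.exists_isPath u v
  rw [hd _ _ _ hp, hd _ _ _ hp.reverse, Walk.weight_reverse hw]

theorem pos (hd : G.IsPathWeightDist w d) (hc : G.Connected)
    (hw : ∀ u v, G.Adj u v → 0 < w u v) {u v : V} (huv : u ≠ v) : 0 < d u v := by
  obtain ⟨p, hp⟩ := hc.exists_isPath u v
  rw [hd _ _ _ hp]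
  exact Walk.weight_pos hw (Walk.not_nil_of_ne huv)

theorem le_add (hd : G.IsPathWeightDist w d) (hc : G.Connected)
    (hw : ∀ u v, G.Adj u v → 0 ≤ w u v) (u v x : V) : d u x ≤ d u v + d v x := by
  classical
  obtain ⟨p, hp⟩ := hc.exists_isPath u v
  obtain ⟨q, hq⟩ := hc.exists_isPath v x
  rw [hd _ _ _ hp, hd _ _ _ hq, ← Walk.weight_append, hd _ _ _ (p.append q).bypass_isPath]
  exact Walk.weight_bypass_le hw _

theorem eq_add_of_separates (hd : G.IsPathWeightDist w d) (hc : G.Connected) {v u x : V}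
    (h : G.Separates v u x) : d u x = d u v + d v x := by
  obtain ⟨p, hp⟩ := hc.exists_isPath u x
  obtain ⟨p₀, p₁, hp₀, hp₁, rfl⟩ := hp.mem_support_iff_exists_append.1 (h p)
  rw [hd _ _ _ hp, hd _ _ _ hp₀, hd _ _ _ hp₁, Walk.weight_append]

theorem half_perimeter_lt_of_separates_of_separates (hd : G.IsPathWeightDist w d)
    (hc : G.Connected) (hsymm : ∀ u v, w u v = w v u) (hpos : ∀ u v, G.Adj u v → 0 < w u v)
    {v x y z q : V} (hxy : G.Separates v x y) (hyz : G.Separates v y z)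
    (hzx : G.Separates v z x) (hyq : G.Separates v y q) (hzq : G.Separates v z q)
    (hq : q ≠ v) : (d x y + d y z + d z x) / 2 < d x q + d y q + d z q := by
  have hvq := hd.pos hc hpos hq.symm
  have htri := hd.le_add hc (fun u v h => (hpos u v h).le) x q v
  linarith [hd.eq_add_of_separates hc hxy, hd.eq_add_of_separates hc hyz,
    hd.eq_add_of_separates hc hzx, hd.eq_add_of_separates hc hyq, hd.eq_add_of_separates hc hzq,
    hd.symm hc hsymm x v, hd.symm hc hsymm y v, hd.symm hc hsymm z v, hd.symm hc hsymm q v]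

theorem half_perimeter_lt_of_separates (hd : G.IsPathWeightDist w d) (hc : G.Connected)
    (hsymm : ∀ u v, w u v = w v u) (hpos : ∀ u v, G.Adj u v → 0 < w u v) {v x y z q : V}
    (hxy : G.Separates v x y) (hyz : G.Separates v y z) (hzx : G.Separates v z x)
    (hq : q ≠ v) : (d x y + d y z + d z x) / 2 < d x q + d y q + d z q := by
  have key := @half_perimeter_lt_of_separates_of_separates _ _ _ _ hd hc hsymm hpos v
  rcases hxy.left_or_right q with hxq | hqy
  · rcases hyz.left_or_right q with hyq | hqz
    · linarith [key hzx hxy hyz hxq hyq hq]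
    · linarith [key hyz hzx hxy hqz.symm hxq hq]
  · rcases hzx.left_or_right q with hzq | hqx
    · linarith [key hxy hyz hzx hqy.symm hzq hq]
    · linarith [key hzx hxy hyz hqx.symm hqy.symm hq]

end IsPathWeightDist

end SimpleGraph

open SimpleGraph in
theorem labeling_surjective_of_fourth_point {X : Type*} {V : Type*} [Fintype V]
    {G : SimpleGraph V} [DecidableRel G.Adj] (hT : G.IsTree) (w : V → V → ℝ)
    (hpos : ∀ u v : V, G.Adj u v → 0 < w u v) (hsymm : ∀ u v : V, w u v = w v u)
    (dT : V → V → ℝ)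
    (hdT : ∀ u v : V, ∀ p : G.Walk u v, p.IsPath → dT u v = p.weight w)
    (φ : X → V) (hdeg : ∀ v : V, G.degree v ≤ 2 → v ∈ Set.range φ)
    (h4th : ∀ x y z : X, ∃ p : X,
      dT (φ x) (φ p) + dT (φ y) (φ p) + dT (φ z) (φ p)
        = (dT (φ x) (φ y) + dT (φ y) (φ z) + dT (φ z) (φ x)) / 2) :
    Function.Surjective φ := by
  intro v
  by_contra hv
  have hbranch : ∀ a, G.Adj v a → ∃ x, ¬ G.Separates v a (φ x) := fun a ha => by
    obtain ⟨u, hu, hau⟩ := hT.isAcyclic.exists_degree_eq_one_not_separates ha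
    obtain ⟨x, rfl⟩ := hdeg u (by omega)
    exact ⟨x, hau⟩
  have hdeg3 : 2 < (G.neighborFinset v).card := by
    rw [card_neighborFinset_eq_degree]
    by_contra! h
    exact hv (hdeg v h)
  obtain ⟨a, b, c, ha, hb, hc, hab, hac, hbc⟩ := Finset.two_lt_card_iff.1 hdeg3
  rw [mem_neighborFinset] at ha hb hc
  obtain ⟨x, hx⟩ := hbranch a ha
  obtain ⟨y, hy⟩ := hbranch b hb
  obtain ⟨z, hz⟩ := hbranch c hc
  have hsep := @hT.isAcyclic.separates_of_not_separates
  obtain ⟨p, hp⟩ := h4th x y z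
  exact (IsPathWeightDist.half_perimeter_lt_of_separates hdT hT.connected hsymm hpos
    (hsep ha hb hab hx hy) (hsep hb hc hbc hy hz) (hsep hc ha hac.symm hz hx)
    (fun h => hv ⟨p, h⟩)).ne' hp
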